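/- For every eigenfunction f of the kernel R(s,t) = C̃(t−s) − C̃(s)C̃(t)/C̃(0) with eigenvalue ã > 0 that is orthogonal to all sine eigenfunctions, the cosine coefficients satisfy f₀ + √2 Σ_{n=1}^∞ fₙᶜ = 0, where f₀ = ∫₀¹ f and fₙᶜ = ∫₀¹ f(τ)√2cos(2nπτ)dτ; equivalently f integrates to zero against the constant extension after renormalization. -/

import Mathlib

/-!
Because `C̃(0) = 1`, the kernel `R(0, t) = C̃(t) - C̃(0) C̃(t)` vanishes, so the eigenvalue equation
at `s = 0` forces `f(0) = 0`. Orthogonality to the sines turns `∫ C̃(t - s) f(t) dt` into the cosine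
series `a₀ f₀ + 2 Σ aₙ fₙᶜ cos(2nπs)`, so the eigenvalue equation exhibits `f` on `[0, 1]` as a
constant plus a cosine series with summable coefficients. Such a series is its own Fourier series
and converges at `0`, hence `0 = f(0) = f₀ + 2 Σ ∫₀¹ f(τ) cos(2nπτ) dτ = f₀ + √2 Σ fₙᶜ`.
-/

open Real intervalIntegral Set

theorem integral_cos_two_mul_int_mul_pi {k : ℤ} (hk : k ≠ 0) :
    ∫ t in (0:ℝ)..1, cos (2 * k * π * t) = 0 := by
  have hc : 2 * (k : ℝ) * π ≠ 0 := by simp [hk, pi_ne_zero]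
  rw [integral_comp_mul_left (fun x => cos x) hc, integral_cos]
  have := sin_int_mul_pi (2 * k)
  push_cast at this
  simp [this]

theorem integral_cos_two_mul_succ_mul_pi (n : ℕ) :
    ∫ t in (0:ℝ)..1, cos (2 * (n + 1) * π * t) = 0 := by
  exact_mod_cast integral_cos_two_mul_int_mul_pi (k := n + 1) (by omega)

theorem integral_cos_mul_cos_two_mul_succ_mul_pi (n m : ℕ) :
    ∫ t in (0:ℝ)..1, cos (2 * (n + 1) * π * t) * cos (2 * (m + 1) * π * t) =
      if n = m then 1 / 2 else 0 := by
  have hprod : ∀ t : ℝ, cos (2 * (n + 1) * π * t) * cos (2 * (m + 1) * π * t) =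
      cos (2 * ((n - m : ℤ) : ℝ) * π * t) / 2 + cos (2 * ((n + m + 2 : ℤ) : ℝ) * π * t) / 2 := by
    intro t
    push_cast
    rw [show 2 * ((n:ℝ) - m) * π * t = 2 * (n + 1) * π * t - 2 * (m + 1) * π * t by ring,
      show 2 * ((n:ℝ) + m + 2) * π * t = 2 * (n + 1) * π * t + 2 * (m + 1) * π * t by ring,
      cos_sub, cos_add]
    ring
  have hint : ∀ c : ℝ, IntervalIntegrable (fun t => cos (c * t) / 2) MeasureTheory.volume 0 1 :=
    fun c => (by fun_prop : Continuous fun t => cos (c * t) / 2).intervalIntegrable 0 1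
  simp_rw [hprod]
  rw [integral_add (hint _) (hint _), intervalIntegral.integral_div, intervalIntegral.integral_div,
    integral_cos_two_mul_int_mul_pi (by omega : (n + m + 2 : ℤ) ≠ 0)]
  split_ifs with h
  · subst h; simp
  · rw [integral_cos_two_mul_int_mul_pi (by omega : (n - m : ℤ) ≠ 0)]; simp

theorem integral_cos_mul_sub_mul {f : ℝ → ℝ} (hf : ContinuousOn f (Icc 0 1)) (ω s : ℝ) :
    ∫ t in (0:ℝ)..1, cos (ω * (t - s)) * f t =
      cos (ω * s) * (∫ t in (0:ℝ)..1, f t * cos (ω * t)) +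
        sin (ω * s) * ∫ t in (0:ℝ)..1, f t * sin (ω * t) := by
  have hint : ∀ g : ℝ → ℝ, Continuous g →
      IntervalIntegrable (fun t => f t * g t) MeasureTheory.volume 0 1 :=
    fun g hg => (hf.mul hg.continuousOn).intervalIntegrable_of_Icc zero_le_one
  rw [← integral_const_mul, ← integral_const_mul,
    ← integral_add ((hint _ (by fun_prop)).const_mul _) ((hint _ (by fun_prop)).const_mul _)]
  refine integral_congr fun t _ => ?_
  rw [mul_sub, cos_sub]
  ring

/-- `b n` is the coefficient of `cos (2 (n + 1) π x)`: the constant term is kept separate. -/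
noncomputable def cosSeries (b : ℕ → ℝ) (x : ℝ) : ℝ := ∑' n, b n * cos (2 * (n + 1) * π * x)

noncomputable def cosCoeff (f : ℝ → ℝ) (n : ℕ) : ℝ :=
  ∫ τ in (0:ℝ)..1, f τ * cos (2 * (n + 1) * π * τ)

theorem summable_mul_cos {b : ℕ → ℝ} (hb : Summable b) (c : ℕ → ℝ) :
    Summable fun n => b n * cos (c n) :=
  hb.abs.of_norm_bounded fun n => by
    simpa [abs_mul] using mul_le_of_le_one_right (abs_nonneg (b n)) (abs_cos_le_one (c n))

theorem cosSeries_zero (b : ℕ → ℝ) : cosSeries b 0 = ∑' n, b n := by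
  simp [cosSeries]

theorem cosSeries_mul_const (b : ℕ → ℝ) (r x : ℝ) :
    cosSeries (fun n => b n * r) x = cosSeries b x * r := by
  simp only [cosSeries, mul_right_comm _ r]
  exact tsum_mul_right

theorem cosSeries_sub_mul_const {b d : ℕ → ℝ} (hb : Summable b) (hd : Summable d) (r x : ℝ) :
    cosSeries b x - cosSeries d x * r = cosSeries (fun n => b n - d n * r) x := by
  simp only [cosSeries, sub_mul, mul_right_comm _ r]
  rw [← tsum_mul_right, ← (summable_mul_cos hb _).tsum_sub ((summable_mul_cos hd _).mul_right r)]

theorem continuous_cosSeries {b : ℕ → ℝ} (hb : Summable b) : Continuous (cosSeries b) :=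
  continuous_tsum (fun n => by fun_prop) hb.abs fun n x => by
    simpa [abs_mul] using mul_le_of_le_one_right (abs_nonneg (b n)) (abs_cos_le_one _)

theorem abs_cosCoeff_le {f : ℝ → ℝ} {M : ℝ} (hM : ∀ t ∈ Icc (0:ℝ) 1, |f t| ≤ M) (n : ℕ) :
    |cosCoeff f n| ≤ M := by
  have hle : ∀ t ∈ uIoc (0:ℝ) 1, ‖f t * cos (2 * (n + 1) * π * t)‖ ≤ M := fun t ht => by
    rw [uIoc_of_le zero_le_one] at ht
    rw [norm_mul, Real.norm_eq_abs, Real.norm_eq_abs]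
    exact (mul_le_of_le_one_right (abs_nonneg _) (abs_cos_le_one _)).trans
      (hM t (Ioc_subset_Icc_self ht))
  simpa [cosCoeff] using norm_integral_le_of_norm_le_const hle

theorem hasSum_integral_cosSeries_sub_mul {b : ℕ → ℝ} {w : ℝ → ℝ} (hb : Summable b)
    (hw : ContinuousOn w (Icc 0 1)) (s : ℝ) :
    HasSum (fun n => b n * ∫ t in (0:ℝ)..1, cos (2 * (n + 1) * π * (t - s)) * w t)
      (∫ t in (0:ℝ)..1, cosSeries b (t - s) * w t) := by
  obtain ⟨M, hM⟩ := isCompact_Icc.exists_bound_of_continuousOn hw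
  have hterm (n : ℕ) : ContinuousOn (fun t => b n * cos (2 * (n + 1) * π * (t - s)) * w t)
      (uIcc 0 1) := by
    rw [uIcc_of_le zero_le_one]
    exact (Continuous.continuousOn (by fun_prop)).mul hw
  simp_rw [← integral_const_mul, ← mul_assoc]
  refine hasSum_integral_of_dominated_convergence (fun n _ => |b n| * M)
    (fun n => (hterm n).intervalIntegrable.def'.aestronglyMeasurable) ?_ ?_ ?_ ?_
  · refine fun n => Filter.Eventually.of_forall fun t ht => ?_
    rw [norm_mul, norm_mul, ← mul_one |b n|]
    exact mul_le_mul (mul_le_mul_of_nonneg_left (by simpa using abs_cos_le_one _) (abs_nonneg _))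
      (hM t (uIoc_subset_uIcc.trans (uIcc_of_le zero_le_one).subset ht)) (norm_nonneg _)
      (by positivity)
  · exact Filter.Eventually.of_forall fun t _ => hb.abs.mul_right M
  · exact intervalIntegrable_const
  · exact Filter.Eventually.of_forall fun t _ =>
      (summable_mul_cos hb _).hasSum.mul_right (w t)

theorem integral_cosSeries {b : ℕ → ℝ} (hb : Summable b) :
    ∫ t in (0:ℝ)..1, cosSeries b t = 0 := by
  have h := hasSum_integral_cosSeries_sub_mul hb (w := fun _ => 1) continuousOn_const 0
  simp only [sub_zero, mul_one, integral_cos_two_mul_succ_mul_pi, mul_zero] at h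
  exact (hasSum_zero.unique h).symm

theorem integral_cosSeries_mul_cos {b : ℕ → ℝ} (hb : Summable b) (m : ℕ) :
    ∫ t in (0:ℝ)..1, cosSeries b t * cos (2 * (m + 1) * π * t) = b m / 2 := by
  have h := hasSum_integral_cosSeries_sub_mul hb
    (w := fun t => cos (2 * (m + 1) * π * t)) (by fun_prop) 0
  simp only [sub_zero, integral_cos_mul_cos_two_mul_succ_mul_pi, mul_ite, mul_zero] at h
  refine h.unique ?_
  convert hasSum_ite_eq m (b m / 2) using 2 with n
  split_ifs with hn
  · subst hn; ring
  · rfl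

theorem integral_cosSeries_sub_mul {b : ℕ → ℝ} {f : ℝ → ℝ} (hb : Summable b)
    (hf : ContinuousOn f (Icc 0 1))
    (hsin : ∀ n : ℕ, ∫ τ in (0:ℝ)..1, f τ * sin (2 * (n + 1) * π * τ) = 0) (s : ℝ) :
    ∫ t in (0:ℝ)..1, cosSeries b (t - s) * f t = cosSeries (fun n => b n * cosCoeff f n) s := by
  rw [← (hasSum_integral_cosSeries_sub_mul hb hf s).tsum_eq, cosSeries]
  refine tsum_congr fun n => ?_
  rw [integral_cos_mul_sub_mul hf, hsin, cosCoeff]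
  ring

theorem hasSum_two_mul_cosCoeff_of_eqOn {g : ℝ → ℝ} {α : ℝ} {β : ℕ → ℝ} (hβ : Summable β)
    (hg : EqOn g (fun x => α + 2 * cosSeries β x) (Icc 0 1)) :
    HasSum (fun n => 2 * cosCoeff g n) (g 0 - ∫ x in (0:ℝ)..1, g x) := by
  have hg' : EqOn g (fun x => α + 2 * cosSeries β x) (uIcc 0 1) := by
    rwa [uIcc_of_le zero_le_one]
  have hcos (n : ℕ) : Continuous fun x => cos (2 * (n + 1) * π * x) := by fun_prop
  have hcS := continuous_cosSeries hβ
  have hmean : ∫ x in (0:ℝ)..1, g x = α := by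
    rw [integral_congr hg', integral_add intervalIntegrable_const
      ((hcS.const_mul 2).intervalIntegrable 0 1), integral_const_mul, integral_cosSeries hβ]
    simp
  have hcoeff (n : ℕ) : cosCoeff g n = β n := by
    rw [cosCoeff, integral_congr fun x hx => by rw [hg' hx]]
    simp only [add_mul, mul_assoc (2:ℝ) (cosSeries β _)]
    rw [integral_add ((hcos n).intervalIntegrable 0 1 |>.const_mul α)
      (by exact ((hcS.mul (hcos n)).intervalIntegrable 0 1).const_mul 2), integral_const_mul,
      integral_const_mul, integral_cos_two_mul_succ_mul_pi, integral_cosSeries_mul_cos hβ]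
    ring
  rw [hmean, hg (left_mem_Icc.2 zero_le_one)]
  dsimp only
  rw [cosSeries_zero, add_sub_cancel_left]
  simpa only [hcoeff] using hβ.hasSum.mul_left 2

theorem exists_eqOn_cosSeries_of_eigen {c₀ atilde : ℝ} {b : ℕ → ℝ} {C f : ℝ → ℝ}
    (hb : Summable b) (hC : ∀ δ, C δ = c₀ + 2 * cosSeries b δ)
    (hf : ContinuousOn f (Icc 0 1))
    (hsin : ∀ n : ℕ, ∫ τ in (0:ℝ)..1, f τ * sin (2 * (n + 1) * π * τ) = 0)
    (hat : atilde ≠ 0)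
    (heig : ∀ s ∈ Icc (0:ℝ) 1, ∫ t in (0:ℝ)..1, (C (t - s) - C s * C t) * f t = atilde * f s) :
    ∃ α β, Summable β ∧ EqOn f (fun x => α + 2 * cosSeries β x) (Icc 0 1) := by
  set I := ∫ t in (0:ℝ)..1, C t * f t with hI
  obtain ⟨M, hM⟩ := isCompact_Icc.exists_bound_of_continuousOn hf
  have hbc : Summable fun n => b n * cosCoeff f n :=
    (hb.abs.mul_right M).of_norm_bounded fun n => by
      rw [norm_mul, Real.norm_eq_abs, Real.norm_eq_abs]
      exact mul_le_mul_of_nonneg_left (abs_cosCoeff_le hM n) (abs_nonneg _)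
  have hCc : Continuous C := by
    rw [funext hC]
    exact continuous_const.add (continuous_const.mul (continuous_cosSeries hb))
  have hmul : ∀ g : ℝ → ℝ, Continuous g →
      IntervalIntegrable (fun t => g t * f t) MeasureTheory.volume 0 1 :=
    fun g hg => (hg.continuousOn.mul hf).intervalIntegrable_of_Icc zero_le_one
  have hshift (s : ℝ) : ∫ t in (0:ℝ)..1, C (t - s) * f t =
      c₀ * (∫ t in (0:ℝ)..1, f t) + 2 * cosSeries (fun n => b n * cosCoeff f n) s := by
    simp only [hC, add_mul, mul_assoc (2:ℝ)]
    have hcS := (continuous_cosSeries hb).comp (continuous_sub_right s)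
    rw [integral_add ((hf.intervalIntegrable_of_Icc zero_le_one).const_mul c₀)
      ((hmul (fun t => cosSeries b (t - s)) hcS).const_mul 2),
      integral_const_mul, integral_const_mul, integral_cosSeries_sub_mul hb hf hsin]
  -- the eigenvalue equation reads `atilde * f s = c₀ ∫ f + 2 cosSeries (b * cosCoeff f) s - C s * I`
  refine ⟨(c₀ * (∫ t in (0:ℝ)..1, f t) - c₀ * I) / atilde,
    fun n => (b n * cosCoeff f n - b n * I) * atilde⁻¹,
    (hbc.sub (hb.mul_right I)).mul_right _, fun s hs => ?_⟩
  have h := heig s hs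
  simp only [sub_mul, mul_assoc (C s)] at h
  rw [integral_sub (hmul (fun t => C (t - s)) (hCc.comp (continuous_sub_right s)))
    ((hmul C hCc).const_mul _), integral_const_mul, hshift s, hC s, ← hI] at h
  dsimp only
  rw [cosSeries_mul_const, ← cosSeries_sub_mul_const hbc hb]
  field_simp
  linear_combination -h

theorem eigenfunction_cosine_coefficients_sum_zero_general
    (a : ℕ → ℝ) (hsum : Summable a)
    (hnorm : a 0 + 2 * ∑' n : ℕ, a (n + 1) = 1)
    (C : ℝ → ℝ)
    (hC : ∀ δ : ℝ, C δ = a 0 + 2 * ∑' n : ℕ, a (n + 1) * Real.cos (2 * (n + 1) * Real.pi * δ))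
    (R : ℝ → ℝ → ℝ)
    (hR : ∀ s t : ℝ, R s t = C (t - s) - C s * C t)
    (atilde : ℝ) (hat : 0 < atilde)
    (f : ℝ → ℝ) (hf : ContinuousOn f (Set.Icc 0 1))
    (heig : ∀ s ∈ Set.Icc (0:ℝ) 1, ∫ t in (0:ℝ)..1, R s t * f t = atilde * f s)
    (horth : ∀ n : ℕ, 1 ≤ n →
      (∫ τ in (0:ℝ)..1, f τ * Real.sin (2 * n * Real.pi * τ)) = 0) :
    HasSum
      (fun n : ℕ => Real.sqrt 2 *
        ∫ τ in (0:ℝ)..1, f τ * (Real.sqrt 2 * Real.cos (2 * (n + 1) * Real.pi * τ)))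
      (-(∫ τ in (0:ℝ)..1, f τ)) := by
  have hC' : ∀ δ, C δ = a 0 + 2 * cosSeries (fun n => a (n + 1)) δ := hC
  have hC0 : C 0 = 1 := by rw [hC', cosSeries_zero, hnorm]
  have hsin (n : ℕ) : ∫ τ in (0:ℝ)..1, f τ * sin (2 * (n + 1) * π * τ) = 0 := by
    exact_mod_cast horth (n + 1) (by omega)
  simp only [hR] at heig
  have hf0 : f 0 = 0 := by
    simpa [hC0, hat.ne'] using (heig 0 (left_mem_Icc.2 zero_le_one)).symm
  obtain ⟨α, β, hβ, hexp⟩ := exists_eqOn_cosSeries_of_eigen ((summable_nat_add_iff 1).2 hsum)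
    hC' hf hsin hat.ne' heig
  have key := hasSum_two_mul_cosCoeff_of_eqOn hβ hexp
  rw [hf0, zero_sub] at key
  convert key using 2 with n
  rw [cosCoeff, ← integral_const_mul, ← integral_const_mul]
  refine integral_congr fun τ _ => ?_
  linear_combination f τ * cos (2 * (n + 1) * π * τ) * mul_self_sqrt (zero_le_two : (0:ℝ) ≤ 2)

/-- Every eigenfunction of the conditioned kernel `R(s,t) = C̃(t-s) - C̃(s)C̃(t)`
(with `C̃(0) = 1`) orthogonal to all sine eigenfunctions has cosine coefficients
satisfying `f₀ + √2 Σ_{n≥1} fₙᶜ = 0`. -/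
theorem eigenfunction_cosine_coefficients_sum_zero
    (a : ℕ → ℝ) (ha : ∀ n, 0 ≤ a n) (hsum : Summable a)
    (hnorm : a 0 + 2 * ∑' n : ℕ, a (n + 1) = 1)
    (C : ℝ → ℝ)
    (hC : ∀ δ : ℝ, C δ = a 0 + 2 * ∑' n : ℕ, a (n + 1) * Real.cos (2 * (n + 1) * Real.pi * δ))
    (R : ℝ → ℝ → ℝ)
    (hR : ∀ s t : ℝ, R s t = C (t - s) - C s * C t)
    (atilde : ℝ) (hat : 0 < atilde)
    (f : ℝ → ℝ) (hf : ContinuousOn f (Set.Icc 0 1))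
    (heig : ∀ s ∈ Set.Icc (0:ℝ) 1, ∫ t in (0:ℝ)..1, R s t * f t = atilde * f s)
    (horth : ∀ n : ℕ, 1 ≤ n →
      (∫ τ in (0:ℝ)..1, f τ * Real.sin (2 * n * Real.pi * τ)) = 0) :
    HasSum
      (fun n : ℕ => Real.sqrt 2 *
        ∫ τ in (0:ℝ)..1, f τ * (Real.sqrt 2 * Real.cos (2 * (n + 1) * Real.pi * τ)))
      (-(∫ τ in (0:ℝ)..1, f τ)) :=
  eigenfunction_cosine_coefficients_sum_zero_general a hsum hnorm C hC R hR atilde hat f hf heig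
    horth
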